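/- Let λ = 15/17 and let d₁, d₂ be decision rules with d₁(N,N) = d₂(N,N) = 0, d₁(N,j) = a11 for j ∈ {2, …, N-2} \ {N-3}, d₁(N,N-3) = a12, d₂(N,j) = a11 for j ∈ {N-2, N-4}, and d₂(N,j) = a12 for j ∈ {2, …, N-5} ∪ {N-3}. Then v^{d₁}_{15/17}(N,j) = v^{d₂}_{15/17}(N,j) for every j ∈ {2, …, N-2} ∪ {N}, irrespective of the actions d₁ and d₂ take at states not of the form (N,j). -/

import Mathlib

namespace AuxMDP

/-- The action labels of the auxiliary MDP. -/
inductive Lab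
  | a11 | a12 | a21 | a22 | a11p | a12p | a21p | a22p | a0 | atil | zero
  deriving DecidableEq

/-- Side lengths in `{2, …, N-2} ∪ {N}`. -/
def goodIdx (N i : ℕ) : Prop := (2 ≤ i ∧ i ≤ N - 2) ∨ i = N

instance (N i : ℕ) : Decidable (goodIdx N i) := by unfold goodIdx; infer_instance

/-- The state space `Ŝ` of the auxiliary MDP. -/
def ShatP (N : ℕ) (s : ℕ × ℕ) : Prop :=
  (goodIdx N s.1 ∧ goodIdx N s.2) ∨ s = (0, 0)

instance (N : ℕ) (s : ℕ × ℕ) : Decidable (ShatP N s) := by unfold ShatP; infer_instance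

/-- The state space as a `Finset`. -/
def ShatF (N : ℕ) : Finset (ℕ × ℕ) :=
  (Finset.range (N + 1) ×ˢ Finset.range (N + 1)).filter (ShatP N)

/-- The admissible action set `Â(s)`. -/
def ActOK (N : ℕ) (s : ℕ × ℕ) (a : Lab) : Prop :=
  if s = (0, 0) ∨ s = (N, N) then a = Lab.zero
  else
    match a with
    | Lab.zero => True
    | Lab.a11 => 3 ≤ s.1 ∧ s.2 ≤ N - 2
    | Lab.a12 => 3 ≤ s.1 ∧ s.2 ≤ N - 3
    | Lab.a11p => s.1 ≤ N - 2 ∧ s.2 ≤ N - 2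
    | Lab.a12p => s.1 ≤ N - 2 ∧ s.2 ≤ N - 3
    | Lab.a21 => 3 ≤ s.2 ∧ s.1 ≤ N - 2
    | Lab.a22 => 3 ≤ s.2 ∧ s.1 ≤ N - 3
    | Lab.a21p => s.2 ≤ N - 2 ∧ s.1 ≤ N - 2
    | Lab.a22p => s.2 ≤ N - 2 ∧ s.1 ≤ N - 3
    | Lab.a0 => s.1 ≤ N - 2 ∧ s.2 ≤ N - 2
    | Lab.atil => s.1 ≤ N - 2 ∧ s.2 ≤ N - 2

/-- Kernel of the action `a11` (flip at distance 1 from the horizontal side,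
away from the corners). -/
noncomputable def ker11 (N : ℕ) (s s' : ℕ × ℕ) : ℝ :=
  if s.2 ≤ N - 3 then
    (if s' = s then 1/3 else if s' = (s.1, s.2 + 1) then 2/3 else 0)
  else if s.2 = N - 2 then
    (if s' = s then 1/4 else if s' = (s.1, N) then 3/4 else 0)
  else 0

/-- Kernel of the action `a11'`. -/
noncomputable def ker11p (N : ℕ) (s s' : ℕ × ℕ) : ℝ :=
  if s.2 ≤ N - 3 then
    (if s' = s then 1/2 else if s' = (s.1, s.2 + 1) then 1/2 else 0)
  else if s.2 = N - 2 then
    (if s' = s then 1/3 else if s' = (s.1, N) then 2/3 else 0)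
  else 0

/-- Kernel of the action `a12`. -/
noncomputable def ker12 (N : ℕ) (s s' : ℕ × ℕ) : ℝ :=
  if s.2 ≤ N - 4 then
    (if s' = s then 5/9 else if s' = (s.1, s.2 + 1) then 7/27
     else if s' = (s.1, s.2 + 2) then 5/27 else 0)
  else if s.2 = N - 3 then
    (if s' = s then 7/18 else if s' = (s.1, N - 2) then 31/144
     else if s' = (s.1, N) then 19/48 else 0)
  else 0

/-- Kernel of the action `a12'`. -/
noncomputable def ker12p (N : ℕ) (s s' : ℕ × ℕ) : ℝ :=
  if s.2 ≤ N - 4 then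
    (if s' = s then 5/8 else if s' = (s.1, s.2 + 1) then 1/4
     else if s' = (s.1, s.2 + 2) then 1/8 else 0)
  else if s.2 = N - 3 then
    (if s' = s then 4/9 else if s' = (s.1, N - 2) then 5/27
     else if s' = (s.1, N) then 10/27 else 0)
  else 0

/-- Kernel of the action `a0` (diagonal flip). -/
noncomputable def ker0 (N : ℕ) (s s' : ℕ × ℕ) : ℝ :=
  if s.1 ≤ N - 3 ∧ s.2 ≤ N - 3 then
    (if s' = s then 4/9 else if s' = (s.1 + 1, s.2) then 1/9
     else if s' = (s.1, s.2 + 1) then 1/9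
     else if s' = (s.1 + 1, s.2 + 1) then 1/3 else 0)
  else if s.1 ≤ N - 3 ∧ s.2 = N - 2 then
    (if s' = s then 5/12 else if s' = (s.1, N) then 1/8
     else if s' = (s.1 + 1, N - 2) then 1/9
     else if s' = (s.1 + 1, N) then 25/72 else 0)
  else if s.1 = N - 2 ∧ s.2 ≤ N - 3 then
    (if s' = s then 5/12 else if s' = (N, s.2) then 1/8
     else if s' = (N - 2, s.2 + 1) then 1/9
     else if s' = (N, s.2 + 1) then 25/72 else 0)
  else if s.1 = N - 2 ∧ s.2 = N - 2 then
    (if s' = s then 7/18 else if s' = (N, N - 2) then 1/8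
     else if s' = (N - 2, N) then 1/8
     else if s' = (N, N) then 13/36 else 0)
  else 0

/-- Kernel of the action `ã` (flip a corner spin of the rectangle). -/
noncomputable def kerTil (N : ℕ) (s s' : ℕ × ℕ) : ℝ :=
  if 3 ≤ s.1 ∧ 3 ≤ s.2 then (if s' = s then 1 else 0)
  else if s.1 = 2 ∧ 3 ≤ s.2 then
    (if s' = s then 1/2 else if s' = (2, s.2 - 1) then 1/2 else 0)
  else if 3 ≤ s.1 ∧ s.2 = 2 then
    (if s' = s then 1/2 else if s' = (s.1 - 1, 2) then 1/2 else 0)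
  else if s.1 = 2 ∧ s.2 = 2 then
    (if s' = s then 1/3 else if s' = ((0 : ℕ), (0 : ℕ)) then 2/3 else 0)
  else 0

/-- Coordinate swap. -/
def swp (s : ℕ × ℕ) : ℕ × ℕ := (s.2, s.1)

/-- The transition kernel `P̂(s' | s, a)` of the auxiliary MDP. -/
noncomputable def Phat (N : ℕ) (s : ℕ × ℕ) (a : Lab) (s' : ℕ × ℕ) : ℝ :=
  match a with
  | Lab.zero => if s' = s then 1 else 0
  | Lab.a11 => ker11 N s s'
  | Lab.a12 => ker12 N s s'
  | Lab.a11p => ker11p N s s'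
  | Lab.a12p => ker12p N s s'
  | Lab.a21 => ker11 N (swp s) (swp s')
  | Lab.a22 => ker12 N (swp s) (swp s')
  | Lab.a21p => ker11p N (swp s) (swp s')
  | Lab.a22p => ker12p N (swp s) (swp s')
  | Lab.a0 => ker0 N s s'
  | Lab.atil => kerTil N s s'

/-- The reward function of the auxiliary MDP. -/
noncomputable def rhat (N : ℕ) (s : ℕ × ℕ) : ℝ := if s = (N, N) then 1 else 0

/-- `d` is a decision rule: it selects admissible actions on `Ŝ`. -/
def IsRule (N : ℕ) (d : ℕ × ℕ → Lab) : Prop :=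
  ∀ s : ℕ × ℕ, ShatP N s → ActOK N s (d s)

/-- `v` is the value function of the decision rule `d` (the unique solution
of the evaluation equations on `Ŝ`). -/
def IsValue (N : ℕ) (lam : ℝ) (d : ℕ × ℕ → Lab) (v : ℕ × ℕ → ℝ) : Prop :=
  ∀ s ∈ ShatF N, v s = rhat N s + lam * ∑ s' ∈ ShatF N, Phat N s (d s) s' * v s'

/-- `d` is an optimal decision rule: its value function dominates the value
function of every decision rule at every state of `Ŝ`. -/
def IsOptimal (N : ℕ) (lam : ℝ) (d : ℕ × ℕ → Lab) : Prop :=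
  IsRule N d ∧
  ∀ vd : ℕ × ℕ → ℝ, IsValue N lam d vd →
    ∀ d' : ℕ × ℕ → Lab, IsRule N d' →
      ∀ v' : ℕ × ℕ → ℝ, IsValue N lam d' v' →
        ∀ s : ℕ × ℕ, ShatP N s → v' s ≤ vd s

/-!
On the row `(N, ·)` both rules only move to the right, so their values are obtained by back
substitution from `(N, N)`. The two rules have the same evaluation equations at `N`, `N-2`, `N-3`
and `N-4`. Further down, the values of `d₁` form a geometric sequence of ratio `5/6`, which at
`λ = 15/17` also solves the `a12` equation used by `d₂`; that equation determines a value from the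
next two, so the two value functions agree all along the row.
-/

theorem eqOn_of_two_step_recurrence {f g : ℕ → ℝ} {a b c : ℝ} (ha : a ≠ 1) {lo m : ℕ}
    (hf : ∀ j, lo ≤ j → j < m → f j = a * f j + b * f (j + 1) + c * f (j + 2))
    (hg : ∀ j, lo ≤ j → j < m → g j = a * g j + b * g (j + 1) + c * g (j + 2))
    (hm : f m = g m) (hm₁ : f (m + 1) = g (m + 1)) :
    ∀ j, lo ≤ j → j ≤ m → f j = g j := by
  suffices key : ∀ k j, lo ≤ j → j + k = m → f j = g j ∧ f (j + 1) = g (j + 1) by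
    intro j hj hjm
    exact (key (m - j) j hj (by omega)).1
  intro k
  induction k with
  | zero =>
    intro j _ hjm
    subst hjm
    exact ⟨hm, hm₁⟩
  | succ k ih =>
    intro j hj hjm
    obtain ⟨h₁, h₂⟩ := ih (j + 1) (by omega) (by omega)
    have hdiff : (1 - a) * (f j - g j) = 0 := by
      linear_combination hf j hj (by omega) - hg j hj (by omega) + b * h₁ + c * h₂
    have hfg : f j = g j := by
      rcases mul_eq_zero.mp hdiff with h | h
      · exact absurd (by linarith) ha
      · linarith
    exact ⟨hfg, h₁⟩

theorem mk_mem_ShatF {N j : ℕ} (hj : goodIdx N j) : ((N, j) : ℕ × ℕ) ∈ ShatF N := by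
  have : j < N + 1 := by unfold goodIdx at hj; omega
  simp only [ShatF, Finset.mem_filter, Finset.mem_product, Finset.mem_range]
  exact ⟨⟨N.lt_succ_self, this⟩, Or.inl ⟨Or.inr rfl, hj⟩⟩

theorem rhat_eq_zero {N j : ℕ} (hj : j ≠ N) : rhat N (N, j) = 0 := by
  simp [rhat, hj]

namespace IsValue

variable {N : ℕ} {lam : ℝ} {d : ℕ × ℕ → Lab} {v : ℕ × ℕ → ℝ}

theorem eq_sum_of_support (hv : IsValue N lam d v) {s : ℕ × ℕ} (hs : s ∈ ShatF N)
    {T : Finset (ℕ × ℕ)} (hT : T ⊆ ShatF N) (hsupp : ∀ s' ∉ T, Phat N s (d s) s' = 0) :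
    v s = rhat N s + lam * ∑ s' ∈ T, Phat N s (d s) s' * v s' := by
  rw [hv s hs, Finset.sum_subset hT fun s' _ hs' => by rw [hsupp s' hs', zero_mul]]

theorem eq_corner (hv : IsValue N lam d v) (hd : d (N, N) = Lab.zero) :
    v (N, N) = 1 + lam * v (N, N) := by
  have hmem := mk_mem_ShatF (N := N) (Or.inr rfl)
  have h := hv.eq_sum_of_support hmem (T := {(N, N)}) (by simpa using hmem)
    (by intro s' hs'; simp_all [Phat])
  simpa [hd, Phat, rhat] using h

theorem eq_a11 (hv : IsValue N lam d v) {j : ℕ} (hj₂ : 2 ≤ j) (hj : j ≤ N - 3)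
    (hd : d (N, j) = Lab.a11) :
    v (N, j) = lam * (1/3 * v (N, j) + 2/3 * v (N, j + 1)) := by
  have hp := mk_mem_ShatF (N := N) (j := j) (Or.inl ⟨hj₂, by omega⟩)
  have hq := mk_mem_ShatF (N := N) (j := j + 1) (Or.inl ⟨by omega, by omega⟩)
  have hne : ((N, j) : ℕ × ℕ) ≠ (N, j + 1) := by simp
  have h := hv.eq_sum_of_support hp (T := {(N, j), (N, j + 1)})
    (Finset.insert_subset hp (Finset.singleton_subset_iff.mpr hq))
    (by intro s' hs'; simp_all [Phat, ker11])
  rw [Finset.sum_pair hne, rhat_eq_zero (by omega), hd] at h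
  simpa [Phat, ker11, hj, hne.symm] using h

theorem eq_a11_last (hv : IsValue N lam d v) (hN : 4 ≤ N) (hd : d (N, N - 2) = Lab.a11) :
    v (N, N - 2) = lam * (1/4 * v (N, N - 2) + 3/4 * v (N, N)) := by
  have hp := mk_mem_ShatF (N := N) (j := N - 2) (Or.inl ⟨by omega, le_rfl⟩)
  have hq := mk_mem_ShatF (N := N) (Or.inr rfl)
  have hlast : ¬ N - 2 ≤ N - 3 := by omega
  have hne : ((N, N - 2) : ℕ × ℕ) ≠ (N, N) := by simp only [ne_eq, Prod.mk.injEq]; omega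
  have h := hv.eq_sum_of_support hp (T := {(N, N - 2), (N, N)})
    (Finset.insert_subset hp (Finset.singleton_subset_iff.mpr hq))
    (by intro s' hs'; simp_all [Phat, ker11])
  rw [Finset.sum_pair hne, rhat_eq_zero (by omega), hd] at h
  simpa [Phat, ker11, hlast, hne.symm] using h

theorem eq_a12 (hv : IsValue N lam d v) {j : ℕ} (hj₂ : 2 ≤ j) (hj : j ≤ N - 4)
    (hd : d (N, j) = Lab.a12) :
    v (N, j) = lam * (5/9 * v (N, j) + 7/27 * v (N, j + 1) + 5/27 * v (N, j + 2)) := by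
  have hp := mk_mem_ShatF (N := N) (j := j) (Or.inl ⟨hj₂, by omega⟩)
  have hq := mk_mem_ShatF (N := N) (j := j + 1) (Or.inl ⟨by omega, by omega⟩)
  have hr := mk_mem_ShatF (N := N) (j := j + 2) (Or.inl ⟨by omega, by omega⟩)
  have hpq : ((N, j) : ℕ × ℕ) ≠ (N, j + 1) := by simp
  have hpr : ((N, j) : ℕ × ℕ) ≠ (N, j + 2) := by simp
  have hqr : ((N, j + 1) : ℕ × ℕ) ≠ (N, j + 2) := by simp
  have h := hv.eq_sum_of_support hp (T := {(N, j), (N, j + 1), (N, j + 2)})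
    (Finset.insert_subset hp (Finset.insert_subset hq (Finset.singleton_subset_iff.mpr hr)))
    (by intro s' hs'; simp_all [Phat, ker12])
  rw [Finset.sum_insert (by simp [hpq, hpr]), Finset.sum_pair hqr, rhat_eq_zero (by omega),
    hd] at h
  simpa [Phat, ker12, hj, hpq.symm, hpr.symm, hqr.symm, add_assoc] using h

theorem eq_a12_last (hv : IsValue N lam d v) (hN : 5 ≤ N) (hd : d (N, N - 3) = Lab.a12) :
    v (N, N - 3) = lam * (7/18 * v (N, N - 3) + 31/144 * v (N, N - 2) + 19/48 * v (N, N)) := by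
  have hp := mk_mem_ShatF (N := N) (j := N - 3) (Or.inl ⟨by omega, by omega⟩)
  have hq := mk_mem_ShatF (N := N) (j := N - 2) (Or.inl ⟨by omega, le_rfl⟩)
  have hr := mk_mem_ShatF (N := N) (Or.inr rfl)
  have hlast : ¬ N - 3 ≤ N - 4 := by omega
  have hpq : ((N, N - 3) : ℕ × ℕ) ≠ (N, N - 2) := by simp only [ne_eq, Prod.mk.injEq]; omega
  have hpr : ((N, N - 3) : ℕ × ℕ) ≠ (N, N) := by simp only [ne_eq, Prod.mk.injEq]; omega
  have hqr : ((N, N - 2) : ℕ × ℕ) ≠ (N, N) := by simp only [ne_eq, Prod.mk.injEq]; omega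
  have h := hv.eq_sum_of_support hp (T := {(N, N - 3), (N, N - 2), (N, N)})
    (Finset.insert_subset hp (Finset.insert_subset hq (Finset.singleton_subset_iff.mpr hr)))
    (by intro s' hs'; simp_all [Phat, ker12])
  rw [Finset.sum_insert (by simp [hpq, hpr]), Finset.sum_pair hqr, rhat_eq_zero (by omega),
    hd] at h
  simpa [Phat, ker12, hlast, hpq.symm, hpr.symm, hqr.symm, add_assoc] using h

end IsValue

/-- `15/17` is the discount at which the ratio-`5/6` geometric profile forced by `a11` also solves
the evaluation equation of `a12`. -/
theorem a12_eq_of_a11_eqs {x y z : ℝ} (hx : x = 15/17 * (1/3 * x + 2/3 * y))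
    (hy : y = 15/17 * (1/3 * y + 2/3 * z)) :
    x = 15/17 * (5/9 * x + 7/27 * y + 5/27 * z) := by
  linarith

theorem values_agree_at_critical_lambda_general (N : ℕ) (hN : 7 ≤ N)
    (d₁ d₂ : ℕ × ℕ → Lab)
    (hd₁N : d₁ (N, N) = Lab.zero) (hd₂N : d₂ (N, N) = Lab.zero)
    (hd₁a : ∀ j : ℕ, 2 ≤ j → j ≤ N - 2 → j ≠ N - 3 → d₁ (N, j) = Lab.a11)
    (hd₁b : d₁ (N, N - 3) = Lab.a12)
    (hd₂a : ∀ j : ℕ, j = N - 2 ∨ j = N - 4 → d₂ (N, j) = Lab.a11)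
    (hd₂b : ∀ j : ℕ, (2 ≤ j ∧ j ≤ N - 5) ∨ j = N - 3 → d₂ (N, j) = Lab.a12)
    (v₁ v₂ : ℕ × ℕ → ℝ)
    (hv₁ : IsValue N (15/17) d₁ v₁) (hv₂ : IsValue N (15/17) d₂ v₂) :
    ∀ j : ℕ, ((2 ≤ j ∧ j ≤ N - 2) ∨ j = N) → v₁ (N, j) = v₂ (N, j) := by
  have hA := hv₁.eq_corner hd₁N
  have hB := hv₂.eq_corner hd₂N
  have hcorner : v₁ (N, N) = v₂ (N, N) := by linarith
  have hA₂ := hv₁.eq_a11_last (by omega) (hd₁a (N - 2) (by omega) le_rfl (by omega))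
  have hB₂ := hv₂.eq_a11_last (by omega) (hd₂a (N - 2) (Or.inl rfl))
  have h₂ : v₁ (N, N - 2) = v₂ (N, N - 2) := by linarith
  have h₃ : v₁ (N, N - 3) = v₂ (N, N - 3) := by
    have hA₃ := hv₁.eq_a12_last (by omega) hd₁b
    have hB₃ := hv₂.eq_a12_last (by omega) (hd₂b (N - 3) (Or.inr rfl))
    linarith
  have hsucc : N - 4 + 1 = N - 3 := by omega
  have h₄ : v₁ (N, N - 4) = v₂ (N, N - 4) := by
    have hA₄ := hv₁.eq_a11 (by omega) (by omega) (hd₁a (N - 4) (by omega) (by omega) (by omega))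
    have hB₄ := hv₂.eq_a11 (by omega) (by omega) (hd₂a (N - 4) (Or.inr rfl))
    rw [hsucc] at hA₄ hB₄
    linarith
  have hlow := eqOn_of_two_step_recurrence (f := fun j => v₁ (N, j)) (g := fun j => v₂ (N, j))
    (a := 15/17 * (5/9)) (b := 15/17 * (7/27)) (c := 15/17 * (5/27)) (lo := 2) (m := N - 4)
    (by norm_num)
    (fun j hj₂ hj => by
      have := a12_eq_of_a11_eqs (hv₁.eq_a11 hj₂ (by omega) (hd₁a j hj₂ (by omega) (by omega)))
        (hv₁.eq_a11 (by omega) (by omega) (hd₁a (j + 1) (by omega) (by omega) (by omega)))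
      linarith)
    (fun j hj₂ hj => by
      have := hv₂.eq_a12 hj₂ (by omega) (hd₂b j (Or.inl ⟨hj₂, by omega⟩))
      linarith)
    h₄ (by simpa only [hsucc] using h₃)
  rintro j (⟨hj₂, hj⟩ | rfl)
  · rcases (by omega : j ≤ N - 4 ∨ j = N - 3 ∨ j = N - 2) with hj | rfl | rfl
    · exact hlow j hj₂ hj
    · exact h₃
    · exact h₂
  · exact hcorner

/-- at the critical discount factor `λ_c = 15/17`, the two decision
rules `d₁` (flip at distance 1 along the top row states, except at `(N, N-3)`)
and `d₂` (flip at distance 2, except at `(N, N-2)` and `(N, N-4)`) have the same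
value at every state `(N, j)`, irrespective of their actions elsewhere. -/
theorem values_agree_at_critical_lambda (N : ℕ) (hN : 7 ≤ N)
    (d₁ d₂ : ℕ × ℕ → Lab) (h₁ : IsRule N d₁) (h₂ : IsRule N d₂)
    (hd₁N : d₁ (N, N) = Lab.zero) (hd₂N : d₂ (N, N) = Lab.zero)
    (hd₁a : ∀ j : ℕ, 2 ≤ j → j ≤ N - 2 → j ≠ N - 3 → d₁ (N, j) = Lab.a11)
    (hd₁b : d₁ (N, N - 3) = Lab.a12)
    (hd₂a : ∀ j : ℕ, j = N - 2 ∨ j = N - 4 → d₂ (N, j) = Lab.a11)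
    (hd₂b : ∀ j : ℕ, (2 ≤ j ∧ j ≤ N - 5) ∨ j = N - 3 → d₂ (N, j) = Lab.a12)
    (v₁ v₂ : ℕ × ℕ → ℝ)
    (hv₁ : IsValue N (15/17) d₁ v₁) (hv₂ : IsValue N (15/17) d₂ v₂) :
    ∀ j : ℕ, ((2 ≤ j ∧ j ≤ N - 2) ∨ j = N) → v₁ (N, j) = v₂ (N, j) :=
  values_agree_at_critical_lambda_general N hN d₁ d₂ hd₁N hd₂N hd₁a hd₁b hd₂a hd₂b v₁ v₂ hv₁ hv₂

end AuxMDP
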